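/- (Coinitial independences coincide) For all coinitial transitions t, u in CCSK: t and u are directly key independent if and only if t ι u. -/
import Mathlib


namespace CCSKP

/-- Action labels: names, co-names and τ. -/
inductive Act : Type where
  | name (a : ℕ)
  | coname (a : ℕ)
  | tau
deriving DecidableEq

/-- Complement of an action label. -/
def Act.bar : Act → Act
  | .name a => .coname a
  | .coname a => .name a
  | .tau => .tau

/-- Directions Left / Right. -/
inductive Dir : Type where
  | L
  | R
deriving DecidableEq

/-- The opposite direction. -/
def Dir.op : Dir → Dir
  | .L => .R
  | .R => .L

/-- Selection according to a direction. -/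
def Dir.sel {α : Type*} : Dir → α → α → α
  | .L, x, _ => x
  | .R, _, y => y

/-- Keys. -/
abbrev Key := ℕ

/-- CCSK processes. -/
inductive Proc : Type where
  | nil
  | pre (α : Act) (X : Proc)
  | res (X : Proc) (a : ℕ)
  | sum (X Y : Proc)
  | par (X Y : Proc)
  | keyed (α : Act) (k : Key) (X : Proc)
deriving DecidableEq

/-- The set of keys occurring in a process. -/
def Proc.keys : Proc → Finset Key
  | .nil => ∅
  | .pre _ X => X.keys
  | .res X _ => X.keys
  | .sum X Y => X.keys ∪ Y.keys
  | .par X Y => X.keys ∪ Y.keys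
  | .keyed _ k X => insert k X.keys

/-- Standard processes: no keys. -/
def Proc.Std (X : Proc) : Prop := X.keys = ∅

/-- Proof keyed labels. -/
inductive PLab : Type where
  | act (α : Act) (k : Key)
  | par (d : Dir) (θ : PLab)
  | sum (d : Dir) (θ : PLab)
  | syn (θL θR : PLab)
deriving DecidableEq

/-- The action ℓ(θ) of a proof keyed label. -/
def PLab.lab : PLab → Act
  | .act α _ => α
  | .par _ θ => θ.lab
  | .sum _ θ => θ.lab
  | .syn _ _ => .tau

/-- The key of a proof keyed label. -/
def PLab.key : PLab → Key
  | .act _ k => k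
  | .par _ θ => θ.key
  | .sum _ θ => θ.key
  | .syn θL _ => θL.key

/-- θ is of the form υ α[k] (no synchronisation pair). -/
def PLab.IsPre : PLab → Prop
  | .act _ _ => True
  | .par _ θ => θ.IsPre
  | .sum _ θ => θ.IsPre
  | .syn _ _ => False

/-- Forward transitions of CCSKP. -/
inductive Fwd : Proc → PLab → Proc → Prop where
  | act {α : Act} {X : Proc} {k : Key} :
      X.keys = ∅ → Fwd (.pre α X) (.act α k) (.keyed α k X)
  | pre {X X' : Proc} {θ : PLab} {α : Act} {k : Key} :
      Fwd X θ X' → θ.key ≠ k → Fwd (.keyed α k X) θ (.keyed α k X')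
  | res {X X' : Proc} {θ : PLab} {a : ℕ} :
      Fwd X θ X' → θ.lab ≠ .name a → θ.lab ≠ .coname a →
      Fwd (.res X a) θ (.res X' a)
  | parL {X X' Y : Proc} {θ : PLab} :
      Fwd X θ X' → θ.key ∉ Y.keys → Fwd (.par X Y) (.par .L θ) (.par X' Y)
  | parR {X Y Y' : Proc} {θ : PLab} :
      Fwd Y θ Y' → θ.key ∉ X.keys → Fwd (.par X Y) (.par .R θ) (.par X Y')
  | syn {X X' Y Y' : Proc} {θ1 θ2 : PLab} :
      Fwd X θ1 X' → Fwd Y θ2 Y' → θ1.IsPre → θ2.IsPre → θ1.lab ≠ .tau →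
      θ2.lab = θ1.lab.bar → θ2.key = θ1.key →
      Fwd (.par X Y) (.syn θ1 θ2) (.par X' Y')
  | sumL {X X' Y : Proc} {θ : PLab} :
      Fwd X θ X' → Y.keys = ∅ → Fwd (.sum X Y) (.sum .L θ) (.sum X' Y)
  | sumR {X Y Y' : Proc} {θ : PLab} :
      Fwd Y θ Y' → X.keys = ∅ → Fwd (.sum X Y) (.sum .R θ) (.sum X Y')

/-- Backward transitions of CCSKP: the exactly symmetric rules. -/
inductive Bwd : Proc → PLab → Proc → Prop where
  | act {α : Act} {X : Proc} {k : Key} :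
      X.keys = ∅ → Bwd (.keyed α k X) (.act α k) (.pre α X)
  | pre {X' X : Proc} {θ : PLab} {α : Act} {k : Key} :
      Bwd X' θ X → θ.key ≠ k → Bwd (.keyed α k X') θ (.keyed α k X)
  | res {X' X : Proc} {θ : PLab} {a : ℕ} :
      Bwd X' θ X → θ.lab ≠ .name a → θ.lab ≠ .coname a →
      Bwd (.res X' a) θ (.res X a)
  | parL {X' X Y : Proc} {θ : PLab} :
      Bwd X' θ X → θ.key ∉ Y.keys → Bwd (.par X' Y) (.par .L θ) (.par X Y)
  | parR {X Y' Y : Proc} {θ : PLab} :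
      Bwd Y' θ Y → θ.key ∉ X.keys → Bwd (.par X Y') (.par .R θ) (.par X Y)
  | syn {X' X Y' Y : Proc} {θ1 θ2 : PLab} :
      Bwd X' θ1 X → Bwd Y' θ2 Y → θ1.IsPre → θ2.IsPre → θ1.lab ≠ .tau →
      θ2.lab = θ1.lab.bar → θ2.key = θ1.key →
      Bwd (.par X' Y') (.syn θ1 θ2) (.par X Y)
  | sumL {X' X Y : Proc} {θ : PLab} :
      Bwd X' θ X → Y.keys = ∅ → Bwd (.sum X' Y) (.sum .L θ) (.sum X Y)
  | sumR {X Y' Y : Proc} {θ : PLab} :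
      Bwd Y' θ Y → X.keys = ∅ → Bwd (.sum X Y') (.sum .R θ) (.sum X Y)

/-- A combined step: forward if `d = true`, backward if `d = false`. -/
def Step (X : Proc) (d : Bool) (θ : PLab) (Y : Proc) : Prop :=
  if d then Fwd X θ Y else Bwd X θ Y

/-- Transitions of CCSKP (forward or backward). -/
structure Tr : Type where
  src : Proc
  fwd? : Bool
  lbl : PLab
  tgt : Proc
deriving DecidableEq

/-- A transition is valid if it is derivable in the LTS. -/
def Tr.Valid (t : Tr) : Prop := Step t.src t.fwd? t.lbl t.tgt

/-- The reverse of a transition. -/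
def Tr.rev (t : Tr) : Tr := ⟨t.tgt, !t.fwd?, t.lbl, t.src⟩

/-- The key of a transition. -/
def Tr.key (t : Tr) : Key := t.lbl.key

/-- Existence of a path between two processes. -/
inductive Reach : Proc → Proc → Prop where
  | refl (X : Proc) : Reach X X
  | step {X Y Z : Proc} {d : Bool} {θ : PLab} :
      Step X d θ Y → Reach Y Z → Reach X Z

/-- t is connected to u: there is a path from the source of t to the target of u. -/
def Tr.ConnectedTo (t u : Tr) : Prop := Reach t.src u.tgt

/-- t and u are connected. -/
def Tr.Connected (t u : Tr) : Prop := t.ConnectedTo u ∨ u.ConnectedTo t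

/-- X cannot perform a backward transition. -/
def Rooted (X : Proc) : Prop := ∀ (θ : PLab) (Y : Proc), ¬ Bwd X θ Y

/-- Reachable processes: target of a rooted path from a standard origin. -/
def Reachable (X : Proc) : Prop := ∃ O : Proc, O.Std ∧ Rooted O ∧ Reach O X

/-- The connectivity relation ⌢ on proof keyed labels. -/
inductive Conn : PLab → PLab → Prop where
  | a1 {α : Act} {k : Key} {θ : PLab} : Conn (.act α k) θ
  | a2 {θ : PLab} {α : Act} {k : Key} :
      (∀ (β : Act) (k' : Key), θ ≠ .act β k') → Conn θ (.act α k)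
  | c1 {d : Dir} {θ θ' : PLab} : Conn θ θ' → Conn (.sum d θ) (.sum d θ')
  | c2 {d : Dir} {θ θ' : PLab} : Conn (.sum d θ) (.sum d.op θ')
  | p1 {d : Dir} {θ θ' : PLab} : Conn θ θ' → Conn (.par d θ) (.par d θ')
  | p2 {d : Dir} {θ θ' : PLab} : Conn (.par d θ) (.par d.op θ')
  | s1 {d : Dir} {θ θL θR : PLab} : Conn θ (d.sel θL θR) → Conn (.par d θ) (.syn θL θR)
  | s2 {d : Dir} {θ θL θR : PLab} : Conn (d.sel θL θR) θ → Conn (.syn θL θR) (.par d θ)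
  | s3 {θ1 θ2 θ1' θ2' : PLab} : Conn θ1 θ1' → Conn θ2 θ2' → Conn (.syn θ1 θ2) (.syn θ1' θ2')

/-- The dependence relation ⊙ on proof keyed labels. -/
inductive Dep : PLab → PLab → Prop where
  | a1 {α : Act} {k : Key} {θ : PLab} : Dep (.act α k) θ
  | a2 {θ : PLab} {α : Act} {k : Key} :
      (∀ (β : Act) (k' : Key), θ ≠ .act β k') → Dep θ (.act α k)
  | c1 {d : Dir} {θ θ' : PLab} : Dep θ θ' → Dep (.sum d θ) (.sum d θ')
  | c2 {d : Dir} {θ θ' : PLab} : Dep (.sum d θ) (.sum d.op θ')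
  | p1 {d : Dir} {θ θ' : PLab} : Dep θ θ' → Dep (.par d θ) (.par d θ')
  | p2k {d : Dir} {θ θ' : PLab} : θ.key = θ'.key → Dep (.par d θ) (.par d.op θ')
  | s1 {d : Dir} {θ θL θR : PLab} : Dep θ (d.sel θL θR) → Dep (.par d θ) (.syn θL θR)
  | s2 {d : Dir} {θ θL θR : PLab} : Dep (d.sel θL θR) θ → Dep (.syn θL θR) (.par d θ)
  | s3a {θ1 θ2 θ1' θ2' : PLab} : Dep θ1 θ1' → Conn θ2 θ2' → Dep (.syn θ1 θ2) (.syn θ1' θ2')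
  | s3b {θ1 θ2 θ1' θ2' : PLab} : Conn θ1 θ1' → Dep θ2 θ2' → Dep (.syn θ1 θ2) (.syn θ1' θ2')

/-- The independence relation ι on proof keyed labels. -/
inductive Ind : PLab → PLab → Prop where
  | c1 {d : Dir} {θ θ' : PLab} : Ind θ θ' → Ind (.sum d θ) (.sum d θ')
  | p1 {d : Dir} {θ θ' : PLab} : Ind θ θ' → Ind (.par d θ) (.par d θ')
  | p2k {d : Dir} {θ θ' : PLab} : θ.key ≠ θ'.key → Ind (.par d θ) (.par d.op θ')
  | s1 {d : Dir} {θ θL θR : PLab} : Ind θ (d.sel θL θR) → Ind (.par d θ) (.syn θL θR)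
  | s2 {d : Dir} {θ θL θR : PLab} : Ind (d.sel θL θR) θ → Ind (.syn θL θR) (.par d θ)
  | s3 {θ1 θ2 θ1' θ2' : PLab} : Ind θ1 θ1' → Ind θ2 θ2' → Ind (.syn θ1 θ2) (.syn θ1' θ2')

/-- Independence of transitions: connected transitions with independent labels. -/
def Tr.ind (t u : Tr) : Prop := t.Valid ∧ u.Valid ∧ t.Connected u ∧ Ind t.lbl u.lbl

/-- Dependence of transitions: connected transitions with dependent labels. -/
def Tr.dep (t u : Tr) : Prop := t.Valid ∧ u.Valid ∧ t.Connected u ∧ Dep t.lbl u.lbl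

end CCSKP

namespace CCSKP

/-- A commuting square of transitions: t, u coinitial; u', t' the opposite sides. -/
def Square (t u u' t' : Tr) : Prop :=
  t.Valid ∧ u.Valid ∧ u'.Valid ∧ t'.Valid ∧
  t.src = u.src ∧ u'.src = t.tgt ∧ t'.src = u.tgt ∧ u'.tgt = t'.tgt ∧
  u'.lbl = u.lbl ∧ u'.fwd? = u.fwd? ∧ t'.lbl = t.lbl ∧ t'.fwd? = t.fwd?

/-- Event equivalence: the smallest equivalence such that in a commuting square
with independent sides, `t ∼ t'` and `reverse t ∼ t'`. -/
inductive EvEq : Tr → Tr → Prop where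
  | refl (t : Tr) : EvEq t t
  | symm {t u : Tr} : EvEq t u → EvEq u t
  | trans {t u v : Tr} : EvEq t u → EvEq u v → EvEq t v
  | sq {t u u' t' : Tr} : Square t u u' t' → t.ind u → EvEq t t'
  | sqrev {t u u' t' : Tr} : Square t u u' t' → t.ind u → EvEq t.rev t'

/-- Paths between processes. -/
inductive Path : Proc → Proc → Type where
  | nil (X : Proc) : Path X X
  | cons {X Y Z : Proc} (t : Tr) (hv : t.Valid) (hs : t.src = X) (ht : t.tgt = Y)
      (r : Path Y Z) : Path X Z

open Classical in
/-- Signed number of occurrences in a path of the event represented by `e`. -/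
noncomputable def Path.count (e : Tr) : ∀ {X Y : Proc}, Path X Y → ℤ
  | _, _, .nil _ => 0
  | _, _, .cons t _ _ _ r =>
      (if EvEq t e then (1 : ℤ) else if EvEq t e.rev then (-1 : ℤ) else 0) + Path.count e r

/-- Membership of a transition in a path. -/
def Path.Mem (u : Tr) : ∀ {X Y : Proc}, Path X Y → Prop
  | _, _, .nil _ => False
  | _, _, .cons t _ _ _ r => u = t ∨ Path.Mem u r

/-- Length of a path. -/
def Path.length : ∀ {X Y : Proc}, Path X Y → ℕ
  | _, _, .nil _ => 0
  | _, _, .cons _ _ _ _ r => Path.length r + 1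

/-- `e` represents a forward event belonging to ev(X). -/
def InEv (X : Proc) (e : Tr) : Prop :=
  e.Valid ∧ e.fwd? = true ∧
  ∃ (O : Proc) (r : Path O X), Rooted O ∧ 0 < Path.count e r

/-- Causal ordering on (representatives of) forward events. -/
def CausLE (e e' : Tr) : Prop :=
  ∀ (O Z : Proc) (r : Path O Z), Rooted O → 0 < Path.count e' r → 0 < Path.count e r

/-- Strict causal ordering on (representatives of) forward events. -/
def EvLT (e e' : Tr) : Prop := CausLE e e' ∧ ¬ EvEq e e'

/-- Core independence on events. -/
def CoreInd (e e' : Tr) : Prop :=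
  ∃ t t' : Tr, EvEq t e ∧ EvEq t' e' ∧ t.src = t'.src ∧ t.ind t'

/-- Independence on events. -/
def EvInd (e e' : Tr) : Prop := ∃ t t' : Tr, EvEq t e ∧ EvEq t' e' ∧ t.ind t'

/-- Dependence on events. -/
def EvDep (e e' : Tr) : Prop :=
  ∃ t t' : Tr, EvEq t e ∧ EvEq t' e' ∧ t.Valid ∧ t'.Valid ∧ Dep t.lbl t'.lbl

/-- Connected events. -/
def EvConnected (e e' : Tr) : Prop :=
  ∃ t t' : Tr, EvEq t e ∧ EvEq t' e' ∧ t.Valid ∧ t'.Valid ∧ t.Connected t'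

/-- Composable events. -/
def EvComposable (e e' : Tr) : Prop :=
  ∃ t t' : Tr, EvEq t e ∧ EvEq t' e' ∧ t.Valid ∧ t'.Valid ∧ t.tgt = t'.src

/-- The forward version of a transition. -/
def Tr.fwdOf (t : Tr) : Tr := if t.fwd? then t else t.rev

/-- Event key equivalence on forward transitions: same key, and a path between the
targets avoiding that key. -/
def KeyEqF (t1 t2 : Tr) : Prop :=
  t1.key = t2.key ∧ ∃ r : Path t1.tgt t2.tgt, ∀ u : Tr, Path.Mem u r → u.key ≠ t1.key

/-- Event key equivalence on arbitrary transitions. -/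
def KeyEq (t1 t2 : Tr) : Prop := KeyEqF t1.fwdOf t2.fwdOf

/-- The generator ord(X) of the key ordering. -/
def ordRel : Proc → Key → Key → Prop
  | .nil, _, _ => False
  | .pre _ X, m, n => ordRel X m n
  | .res X _, m, n => ordRel X m n
  | .sum X Y, m, n => ordRel X m n ∨ ordRel Y m n
  | .par X Y, m, n => ordRel X m n ∨ ordRel Y m n
  | .keyed _ k X, m, n => ordRel X m n ∨ (m = k ∧ n ∈ X.keys)

/-- Key ordering ≤_X : reflexive transitive closure of ord(X). -/
def keyLE (X : Proc) : Key → Key → Prop := Relation.ReflTransGen (ordRel X)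

end CCSKP

namespace CCSKP

/-- CCSK forward transitions: erasures of CCSKP forward transitions. -/
def KFwd (X : Proc) (α : Act) (k : Key) (Y : Proc) : Prop :=
  ∃ θ : PLab, θ.lab = α ∧ θ.key = k ∧ Fwd X θ Y

/-- CCSK backward transitions: erasures of CCSKP backward transitions. -/
def KBwd (X : Proc) (α : Act) (k : Key) (Y : Proc) : Prop :=
  ∃ θ : PLab, θ.lab = α ∧ θ.key = k ∧ Bwd X θ Y

/-- A combined CCSK step. -/
def KStep (X : Proc) (d : Bool) (α : Act) (k : Key) (Y : Proc) : Prop :=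
  if d then KFwd X α k Y else KBwd X α k Y

/-- CCSK transitions. -/
structure KTr : Type where
  src : Proc
  fwd? : Bool
  act : Act
  key : Key
  tgt : Proc
deriving DecidableEq

def KTr.Valid (t : KTr) : Prop := KStep t.src t.fwd? t.act t.key t.tgt

def KTr.rev (t : KTr) : KTr := ⟨t.tgt, !t.fwd?, t.act, t.key, t.src⟩

def KTr.Connected (t u : KTr) : Prop := Reach t.src u.tgt ∨ Reach u.src t.tgt

/-- Independence of CCSK transitions: connected, and the proof keyed labels of the
corresponding (unique) CCSKP transitions are independent. -/
def KTr.ind (t u : KTr) : Prop :=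
  t.Valid ∧ u.Valid ∧ t.Connected u ∧
  ∃ θ1 θ2 : PLab,
    θ1.lab = t.act ∧ θ1.key = t.key ∧ Step t.src t.fwd? θ1 t.tgt ∧
    θ2.lab = u.act ∧ θ2.key = u.key ∧ Step u.src u.fwd? θ2 u.tgt ∧
    Ind θ1 θ2

/-- Directly key independent CCSK transitions: coinitial, different keys, and a
completing square with the same label-key pairs and directions. -/
def KTr.DKI (t u : KTr) : Prop :=
  t.Valid ∧ u.Valid ∧ t.src = u.src ∧ t.key ≠ u.key ∧
  ∃ S : Proc, KStep t.tgt u.fwd? u.act u.key S ∧ KStep u.tgt t.fwd? t.act t.key S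

/-- A commuting square of CCSK transitions. -/
def KSquare (t u u' t' : KTr) : Prop :=
  t.Valid ∧ u.Valid ∧ u'.Valid ∧ t'.Valid ∧
  t.src = u.src ∧ u'.src = t.tgt ∧ t'.src = u.tgt ∧ u'.tgt = t'.tgt ∧
  u'.act = u.act ∧ u'.key = u.key ∧ u'.fwd? = u.fwd? ∧
  t'.act = t.act ∧ t'.key = t.key ∧ t'.fwd? = t.fwd?

/-- Event equivalence on CCSK transitions. -/
inductive KEvEq : KTr → KTr → Prop where
  | refl (t : KTr) : KEvEq t t
  | symm {t u : KTr} : KEvEq t u → KEvEq u t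
  | trans {t u v : KTr} : KEvEq t u → KEvEq u v → KEvEq t v
  | sq {t u u' t' : KTr} : KSquare t u u' t' → t.ind u → KEvEq t t'
  | sqrev {t u u' t' : KTr} : KSquare t u u' t' → t.ind u → KEvEq t.rev t'

def KTr.fwdOf (t : KTr) : KTr := if t.fwd? then t else t.rev

/-- Event key equivalence on forward CCSK transitions. -/
def KKeyEqF (t1 t2 : KTr) : Prop :=
  t1.key = t2.key ∧ ∃ r : Path t1.tgt t2.tgt, ∀ u : Tr, Path.Mem u r → u.key ≠ t1.key

/-- Event key equivalence on arbitrary CCSK transitions. -/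
def KKeyEq (t1 t2 : KTr) : Prop := KKeyEqF t1.fwdOf t2.fwdOf

/-- Key independent CCSK transitions. -/
def KKeyInd (t u : KTr) : Prop :=
  t.Connected u ∧ ∃ t' u' : KTr, KKeyEq t t' ∧ KKeyEq u u' ∧ t'.DKI u'

/-- Core independence on CCSK transitions. -/
def KCoreInd (t u : KTr) : Prop :=
  ∃ t0 u0 : KTr, KEvEq t0 t ∧ KEvEq u0 u ∧ t0.src = u0.src ∧ t0.ind u0

end CCSKP

namespace CCSKP

/-! ### Auxiliary infrastructure -/

@[simp] theorem Step_true {X θ Y} : Step X true θ Y ↔ Fwd X θ Y := Iff.rfl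
@[simp] theorem Step_false {X θ Y} : Step X false θ Y ↔ Bwd X θ Y := Iff.rfl

theorem fwd_keys : ∀ {X θ Y}, Fwd X θ Y →
    Y.keys = insert θ.key X.keys ∧ θ.key ∉ X.keys := by
  intro X θ Y h
  induction h with
  | act h => simp [Proc.keys, PLab.key, h]
  | pre h hk ih =>
      obtain ⟨h1, h2⟩ := ih
      refine ⟨by simp [Proc.keys, PLab.key, h1, Finset.insert_comm], ?_⟩
      simp [Proc.keys, PLab.key, hk, h2]
  | res h _ _ ih => simpa [Proc.keys, PLab.key] using ih
  | parL h hk ih =>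
      obtain ⟨h1, h2⟩ := ih
      refine ⟨by simp [Proc.keys, PLab.key, h1, Finset.insert_union], ?_⟩
      simp [Proc.keys, PLab.key, h2, hk]
  | parR h hk ih =>
      obtain ⟨h1, h2⟩ := ih
      refine ⟨by simp [Proc.keys, PLab.key, h1, Finset.union_insert], ?_⟩
      simp [Proc.keys, PLab.key, h2, hk]
  | syn hX hY _ _ _ _ hkey ih1 ih2 =>
      obtain ⟨a1, a2⟩ := ih1
      obtain ⟨b1, b2⟩ := ih2
      refine ⟨by simp [Proc.keys, PLab.key, a1, b1, hkey, Finset.insert_union,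
        Finset.union_insert], ?_⟩
      simp only [Proc.keys, PLab.key, Finset.mem_union]
      rintro (h | h)
      · exact a2 h
      · exact b2 (by rw [hkey]; exact h)
  | sumL h hY ih =>
      obtain ⟨h1, h2⟩ := ih
      refine ⟨by simp [Proc.keys, PLab.key, h1, Finset.insert_union], ?_⟩
      simp [Proc.keys, PLab.key, h2, hY]
  | sumR h hX ih =>
      obtain ⟨h1, h2⟩ := ih
      refine ⟨by simp [Proc.keys, PLab.key, h1, Finset.union_insert], ?_⟩
      simp [Proc.keys, PLab.key, h2, hX]

theorem bwd_keys : ∀ {X θ Y}, Bwd X θ Y →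
    X.keys = insert θ.key Y.keys ∧ θ.key ∉ Y.keys := by
  intro X θ Y h
  induction h with
  | act h => simp [Proc.keys, PLab.key, h]
  | pre h hk ih =>
      obtain ⟨h1, h2⟩ := ih
      refine ⟨by simp [Proc.keys, PLab.key, h1, Finset.insert_comm], ?_⟩
      simp [Proc.keys, PLab.key, hk, h2]
  | res h _ _ ih => simpa [Proc.keys, PLab.key] using ih
  | parL h hk ih =>
      obtain ⟨h1, h2⟩ := ih
      refine ⟨by simp [Proc.keys, PLab.key, h1, Finset.insert_union], ?_⟩
      simp [Proc.keys, PLab.key, h2, hk]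
  | parR h hk ih =>
      obtain ⟨h1, h2⟩ := ih
      refine ⟨by simp [Proc.keys, PLab.key, h1, Finset.union_insert], ?_⟩
      simp [Proc.keys, PLab.key, h2, hk]
  | syn hX hY _ _ _ _ hkey ih1 ih2 =>
      obtain ⟨a1, a2⟩ := ih1
      obtain ⟨b1, b2⟩ := ih2
      refine ⟨by simp [Proc.keys, PLab.key, a1, b1, hkey, Finset.insert_union,
        Finset.union_insert], ?_⟩
      simp only [Proc.keys, PLab.key, Finset.mem_union]
      rintro (h | h)
      · exact a2 h
      · exact b2 (by rw [hkey]; exact h)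
  | sumL h hY ih =>
      obtain ⟨h1, h2⟩ := ih
      refine ⟨by simp [Proc.keys, PLab.key, h1, Finset.insert_union], ?_⟩
      simp [Proc.keys, PLab.key, h2, hY]
  | sumR h hX ih =>
      obtain ⟨h1, h2⟩ := ih
      refine ⟨by simp [Proc.keys, PLab.key, h1, Finset.union_insert], ?_⟩
      simp [Proc.keys, PLab.key, h2, hX]

/-- Key-set effect of a step. -/
def KS (b : Bool) (k : Key) (A B : Finset Key) : Prop :=
  if b then B = insert k A ∧ k ∉ A else A = insert k B ∧ k ∉ B

theorem step_keys {X b θ Y} (h : Step X b θ Y) : KS b θ.key X.keys Y.keys := by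
  cases b
  · exact bwd_keys h
  · exact fwd_keys h

theorem KS.irrefl {b k A} (h : KS b k A A) : False := by
  cases b <;> obtain ⟨h1, h2⟩ := h <;> exact h2 (h1 ▸ Finset.mem_insert_self k A)

theorem KS.same {b1 b2 k1 k2 A B} (h1 : KS b1 k1 A B) (h2 : KS b2 k2 A B) :
    k1 = k2 := by
  cases b1 <;> cases b2 <;> obtain ⟨e1, m1⟩ := h1 <;> obtain ⟨e2, m2⟩ := h2
  · -- both backward
    have : k1 ∈ insert k2 B := e2 ▸ e1 ▸ Finset.mem_insert_self k1 B
    rcases Finset.mem_insert.mp this with h | h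
    · exact h
    · exact absurd h m1
  · -- bwd/fwd : A = insert k1 B, B = insert k2 A
    exact absurd (e1 ▸ Finset.mem_insert_self k1 B :
      k1 ∈ A) (fun hA => m1 (e2 ▸ Finset.mem_insert_of_mem hA))
  · -- fwd/bwd
    exact absurd (e2 ▸ Finset.mem_insert_self k2 B :
      k2 ∈ A) (fun hA => m2 (e1 ▸ Finset.mem_insert_of_mem hA))
  · -- both forward
    have : k1 ∈ insert k2 A := e2 ▸ e1 ▸ Finset.mem_insert_self k1 A
    rcases Finset.mem_insert.mp this with h | h
    · exact h
    · exact absurd h m1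

theorem KS.flip {b k A B} (h : KS b k A B) : KS (!b) k B A := by
  cases b <;> exact h

theorem KS.inj {b k A B C} (h1 : KS b k A B) (h2 : KS b k C B) : A = C := by
  cases b <;> obtain ⟨e1, m1⟩ := h1 <;> obtain ⟨e2, m2⟩ := h2
  · exact e1.trans e2.symm
  · calc A = (insert k A).erase k := (Finset.erase_insert m1).symm
      _ = (insert k C).erase k := by rw [← e1, ← e2]
      _ = C := Finset.erase_insert m2

theorem KS.not_both_empty {b k A B} (h : KS b k A B) (hA : A = ∅) (hB : B = ∅) :
    False := by
  cases b <;> obtain ⟨e1, _⟩ := h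
  · exact Finset.insert_ne_empty _ _ (hA ▸ e1).symm
  · exact Finset.insert_ne_empty _ _ (hB ▸ e1).symm

theorem KS.tgt_subset {b k A B} (h : KS b k A B) : B ⊆ insert k A := by
  cases b <;> obtain ⟨e1, _⟩ := h
  · intro x hx; rw [e1]; exact Finset.mem_insert_of_mem (Finset.mem_insert_of_mem hx)
  · intro x hx; rw [e1] at hx; exact hx

/-- Step-level consequences. -/
theorem step_keys_ne {X b θ Y} (h : Step X b θ Y) : X.keys ≠ Y.keys := by
  intro hEq
  exact KS.irrefl (hEq ▸ step_keys h)

theorem step_same_tgt {X b1 b2 θ1 θ2 Y} (h1 : Step X b1 θ1 Y) (h2 : Step X b2 θ2 Y) :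
    θ1.key = θ2.key := KS.same (step_keys h1) (step_keys h2)

theorem step_loop {X b1 b2 θ1 θ2 Y} (h1 : Step X b1 θ1 Y) (h2 : Step Y b2 θ2 X) :
    θ1.key = θ2.key := KS.same (step_keys h1) (KS.flip (step_keys h2))

theorem step_tri {X Y Z b b' θ1 θ2 θ3} (h1 : Step X b θ1 Y) (h2 : Step Z b θ2 Y)
    (hk : θ2.key = θ1.key) (h3 : Step X b' θ3 Z) : False := by
  have := KS.inj (step_keys h1) (hk ▸ step_keys h2)
  exact step_keys_ne h3 this

theorem step_not_both_empty {X b θ Y} (h : Step X b θ Y) (hX : X.keys = ∅)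
    (hY : Y.keys = ∅) : False := KS.not_both_empty (step_keys h) hX hY

theorem step_notmem_tgt {X b θ Y k} (h : Step X b θ Y) (h1 : k ∉ X.keys)
    (h2 : k ≠ θ.key) : k ∉ Y.keys := fun hm =>
  (Finset.mem_insert.mp (KS.tgt_subset (step_keys h) hm)).elim h2 h1

/-! ### Inversion lemmas -/

theorem step_nil_inv {b θ Z} (h : Step Proc.nil b θ Z) : False := by
  cases b <;> cases h

theorem step_pre_inv {α X0 b θ Z} (h : Step (Proc.pre α X0) b θ Z) :
    b = true ∧ ∃ k, θ = .act α k ∧ Z = .keyed α k X0 ∧ X0.keys = ∅ := by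
  cases b
  · cases h
  · cases h with
    | act h => exact ⟨rfl, _, rfl, rfl, h⟩

theorem step_keyed_inv {α k X0 b θ Z} (h : Step (Proc.keyed α k X0) b θ Z) :
    (∃ X', Z = .keyed α k X' ∧ Step X0 b θ X' ∧ θ.key ≠ k) ∨
    (b = false ∧ θ = .act α k ∧ Z = .pre α X0 ∧ X0.keys = ∅) := by
  cases b
  · cases h with
    | act h => exact Or.inr ⟨rfl, rfl, rfl, h⟩
    | pre h hk => exact Or.inl ⟨_, rfl, h, hk⟩
  · cases h with
    | pre h hk => exact Or.inl ⟨_, rfl, h, hk⟩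

theorem step_res_inv {X0 a b θ Z} (h : Step (Proc.res X0 a) b θ Z) :
    ∃ X', Z = .res X' a ∧ Step X0 b θ X' ∧ θ.lab ≠ .name a ∧ θ.lab ≠ .coname a := by
  cases b
  · cases h with
    | res h h1 h2 => exact ⟨_, rfl, h, h1, h2⟩
  · cases h with
    | res h h1 h2 => exact ⟨_, rfl, h, h1, h2⟩

theorem step_sum_inv {A B b θ Z} (h : Step (Proc.sum A B) b θ Z) :
    (∃ φ A', θ = .sum .L φ ∧ Z = .sum A' B ∧ Step A b φ A' ∧ B.keys = ∅) ∨
    (∃ φ B', θ = .sum .R φ ∧ Z = .sum A B' ∧ Step B b φ B' ∧ A.keys = ∅) := by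
  cases b
  · cases h with
    | sumL h hY => exact Or.inl ⟨_, _, rfl, rfl, h, hY⟩
    | sumR h hX => exact Or.inr ⟨_, _, rfl, rfl, h, hX⟩
  · cases h with
    | sumL h hY => exact Or.inl ⟨_, _, rfl, rfl, h, hY⟩
    | sumR h hX => exact Or.inr ⟨_, _, rfl, rfl, h, hX⟩

theorem step_par_inv {A B b θ Z} (h : Step (Proc.par A B) b θ Z) :
    (∃ φ A', θ = .par .L φ ∧ Z = .par A' B ∧ Step A b φ A' ∧ φ.key ∉ B.keys) ∨
    (∃ φ B', θ = .par .R φ ∧ Z = .par A B' ∧ Step B b φ B' ∧ φ.key ∉ A.keys) ∨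
    (∃ φ1 φ2 A' B', θ = .syn φ1 φ2 ∧ Z = .par A' B' ∧ Step A b φ1 A' ∧
      Step B b φ2 B' ∧ φ1.IsPre ∧ φ2.IsPre ∧ φ1.lab ≠ .tau ∧
      φ2.lab = φ1.lab.bar ∧ φ2.key = φ1.key) := by
  cases b
  · cases h with
    | parL h hk => exact Or.inl ⟨_, _, rfl, rfl, h, hk⟩
    | parR h hk => exact Or.inr (Or.inl ⟨_, _, rfl, rfl, h, hk⟩)
    | syn h1 h2 p1 p2 nt bar key =>
        exact Or.inr (Or.inr ⟨_, _, _, _, rfl, rfl, h1, h2, p1, p2, nt, bar, key⟩)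
  · cases h with
    | parL h hk => exact Or.inl ⟨_, _, rfl, rfl, h, hk⟩
    | parR h hk => exact Or.inr (Or.inl ⟨_, _, rfl, rfl, h, hk⟩)
    | syn h1 h2 p1 p2 nt bar key =>
        exact Or.inr (Or.inr ⟨_, _, _, _, rfl, rfl, h1, h2, p1, p2, nt, bar, key⟩)

/-! ### Introduction lemmas -/

theorem Step.keyed' {X b θ Y α k} (h : Step X b θ Y) (hk : θ.key ≠ k) :
    Step (.keyed α k X) b θ (.keyed α k Y) := by
  cases b
  · exact Bwd.pre h hk
  · exact Fwd.pre h hk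

theorem Step.res' {X b θ Y a} (h : Step X b θ Y) (h1 : θ.lab ≠ .name a)
    (h2 : θ.lab ≠ .coname a) : Step (.res X a) b θ (.res Y a) := by
  cases b
  · exact Bwd.res h h1 h2
  · exact Fwd.res h h1 h2

theorem Step.sumL' {X b θ X' Y} (h : Step X b θ X') (hY : Y.keys = ∅) :
    Step (.sum X Y) b (.sum .L θ) (.sum X' Y) := by
  cases b
  · exact Bwd.sumL h hY
  · exact Fwd.sumL h hY

theorem Step.sumR' {X Y b θ Y'} (h : Step Y b θ Y') (hX : X.keys = ∅) :
    Step (.sum X Y) b (.sum .R θ) (.sum X Y') := by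
  cases b
  · exact Bwd.sumR h hX
  · exact Fwd.sumR h hX

theorem Step.parL' {X b θ X' Y} (h : Step X b θ X') (hk : θ.key ∉ Y.keys) :
    Step (.par X Y) b (.par .L θ) (.par X' Y) := by
  cases b
  · exact Bwd.parL h hk
  · exact Fwd.parL h hk

theorem Step.parR' {X Y b θ Y'} (h : Step Y b θ Y') (hk : θ.key ∉ X.keys) :
    Step (.par X Y) b (.par .R θ) (.par X Y') := by
  cases b
  · exact Bwd.parR h hk
  · exact Fwd.parR h hk

theorem Step.syn' {X X' Y Y' b θ1 θ2} (h1 : Step X b θ1 X') (h2 : Step Y b θ2 Y')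
    (p1 : θ1.IsPre) (p2 : θ2.IsPre) (nt : θ1.lab ≠ .tau) (bar : θ2.lab = θ1.lab.bar)
    (key : θ2.key = θ1.key) : Step (.par X Y) b (.syn θ1 θ2) (.par X' Y') := by
  cases b
  · exact Bwd.syn h1 h2 p1 p2 nt bar key
  · exact Fwd.syn h1 h2 p1 p2 nt bar key

theorem kstep_iff {X b α k Y} :
    KStep X b α k Y ↔ ∃ θ : PLab, θ.lab = α ∧ θ.key = k ∧ Step X b θ Y := by
  cases b <;> rfl

/-! ### Independence implies the diamond -/

theorem ind_diamond (X : Proc) : ∀ {b1 b2 θ1 θ2 Y1 Y2},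
    Step X b1 θ1 Y1 → Step X b2 θ2 Y2 → Ind θ1 θ2 →
    θ1.key ≠ θ2.key ∧ ∃ S, Step Y1 b2 θ2 S ∧ Step Y2 b1 θ1 S := by
  induction X with
  | nil => intro _ _ _ _ _ _ h1 _ _; exact absurd h1 step_nil_inv
  | pre α X0 _ =>
      intro b1 b2 θ1 θ2 Y1 Y2 h1 h2 hind
      obtain ⟨_, k1, rfl, _, _⟩ := step_pre_inv h1
      cases hind
  | keyed α k X0 ih =>
      intro b1 b2 θ1 θ2 Y1 Y2 h1 h2 hind
      rcases step_keyed_inv h1 with ⟨X1, rfl, h1', hne1⟩ | ⟨_, rfl, _, _⟩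
      · rcases step_keyed_inv h2 with ⟨X2, rfl, h2', hne2⟩ | ⟨_, rfl, _, _⟩
        · obtain ⟨hk, S0, hA, hB⟩ := ih h1' h2' hind
          exact ⟨hk, .keyed α k S0, Step.keyed' hA hne2, Step.keyed' hB hne1⟩
        · cases hind
      · cases hind
  | res X0 a ih =>
      intro b1 b2 θ1 θ2 Y1 Y2 h1 h2 hind
      obtain ⟨X1, rfl, h1', l1, l2⟩ := step_res_inv h1
      obtain ⟨X2, rfl, h2', l3, l4⟩ := step_res_inv h2
      obtain ⟨hk, S0, hA, hB⟩ := ih h1' h2' hind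
      exact ⟨hk, .res S0 a, Step.res' hA l3 l4, Step.res' hB l1 l2⟩
  | sum A B ihA ihB =>
      intro b1 b2 θ1 θ2 Y1 Y2 h1 h2 hind
      rcases step_sum_inv h1 with ⟨φ1, A1, rfl, rfl, h1', hstd1⟩ | ⟨φ1, B1, rfl, rfl, h1', hstd1⟩ <;>
        rcases step_sum_inv h2 with ⟨φ2, A2, rfl, rfl, h2', hstd2⟩ | ⟨φ2, B2, rfl, rfl, h2', hstd2⟩
      · cases hind with
        | c1 hi =>
            obtain ⟨hk, S0, hA, hB⟩ := ihA h1' h2' hi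
            exact ⟨by simpa [PLab.key] using hk, .sum S0 B,
              Step.sumL' hA hstd1, Step.sumL' hB hstd2⟩
      · cases hind
      · cases hind
      · cases hind with
        | c1 hi =>
            obtain ⟨hk, S0, hA, hB⟩ := ihB h1' h2' hi
            exact ⟨by simpa [PLab.key] using hk, .sum A S0,
              Step.sumR' hA hstd1, Step.sumR' hB hstd2⟩
  | par A B ihA ihB =>
      intro b1 b2 θ1 θ2 Y1 Y2 h1 h2 hind
      rcases step_par_inv h1 with ⟨φ1, A1, rfl, rfl, h1', hn1⟩ |
        ⟨φ1, B1, rfl, rfl, h1', hn1⟩ |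
        ⟨φ1L, φ1R, A1, B1, rfl, rfl, h1L, h1R, p11, p12, nt1, bar1, key1⟩ <;>
      rcases step_par_inv h2 with ⟨φ2, A2, rfl, rfl, h2', hn2⟩ |
        ⟨φ2, B2, rfl, rfl, h2', hn2⟩ |
        ⟨φ2L, φ2R, A2, B2, rfl, rfl, h2L, h2R, p21, p22, nt2, bar2, key2⟩
      · -- (L,L)
        cases hind with
        | p1 hi =>
            obtain ⟨hk, S0, hA, hB⟩ := ihA h1' h2' hi
            exact ⟨by simpa [PLab.key] using hk, .par S0 B,
              Step.parL' hA hn2, Step.parL' hB hn1⟩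
      · -- (L,R)
        cases hind with
        | p2k hk =>
            refine ⟨by simpa [PLab.key] using hk, .par A1 B2,
              Step.parR' h2' (step_notmem_tgt h1' hn2 ?_),
              Step.parL' h1' (step_notmem_tgt h2' hn1 ?_)⟩
            · simpa [PLab.key] using (Ne.symm hk)
            · simpa [PLab.key] using hk
      · -- (L,syn)
        cases hind with
        | s1 hi =>
            simp only [Dir.sel] at hi
            obtain ⟨hk, S0, hA, hB⟩ := ihA h1' h2L hi
            refine ⟨by simpa [PLab.key] using hk, .par S0 B2,
              Step.syn' hA h2R p21 p22 nt2 bar2 key2,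
              Step.parL' hB (step_notmem_tgt h2R hn1 ?_)⟩
            rw [key2]; exact hk
      · -- (R,L)
        cases hind with
        | p2k hk =>
            refine ⟨by simpa [PLab.key] using hk, .par A2 B1,
              Step.parL' h2' (step_notmem_tgt h1' hn2 ?_),
              Step.parR' h1' (step_notmem_tgt h2' hn1 ?_)⟩
            · simpa [PLab.key] using (Ne.symm hk)
            · simpa [PLab.key] using hk
      · -- (R,R)
        cases hind with
        | p1 hi =>
            obtain ⟨hk, S0, hA, hB⟩ := ihB h1' h2' hi
            exact ⟨by simpa [PLab.key] using hk, .par A S0,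
              Step.parR' hA hn2, Step.parR' hB hn1⟩
      · -- (R,syn)
        cases hind with
        | s1 hi =>
            simp only [Dir.sel] at hi
            obtain ⟨hk, S0, hA, hB⟩ := ihB h1' h2R hi
            refine ⟨by simp only [PLab.key]; rw [← key2]; exact hk, .par A2 S0,
              Step.syn' h2L hA p21 p22 nt2 bar2 key2,
              Step.parR' hB (step_notmem_tgt h2L hn1 ?_)⟩
            rw [← key2]; exact hk
      · -- (syn,L)
        cases hind with
        | s2 hi =>
            simp only [Dir.sel] at hi
            obtain ⟨hk, S0, hA, hB⟩ := ihA h1L h2' hi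
            refine ⟨by simpa [PLab.key] using hk, .par S0 B1,
              Step.parL' hA (step_notmem_tgt h1R hn2 ?_),
              Step.syn' hB h1R p11 p12 nt1 bar1 key1⟩
            rw [key1]; exact Ne.symm hk
      · -- (syn,R)
        cases hind with
        | s2 hi =>
            simp only [Dir.sel] at hi
            obtain ⟨hk, S0, hA, hB⟩ := ihB h1R h2' hi
            refine ⟨by simp only [PLab.key]; rw [← key1]; exact hk, .par A1 S0,
              Step.parR' hA (step_notmem_tgt h1L hn2 ?_),
              Step.syn' h1L hB p11 p12 nt1 bar1 key1⟩
            rw [← key1]; exact Ne.symm hk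
      · -- (syn,syn)
        cases hind with
        | s3 hiL hiR =>
            obtain ⟨hkL, SA, hAL, hBL⟩ := ihA h1L h2L hiL
            obtain ⟨hkR, SB, hAR, hBR⟩ := ihB h1R h2R hiR
            exact ⟨by simpa [PLab.key] using hkL, .par SA SB,
              Step.syn' hAL hAR p21 p22 nt2 bar2 key2,
              Step.syn' hBL hBR p11 p12 nt1 bar1 key1⟩

/-! ### Squares imply independence -/

theorem square_ind (X : Proc) : ∀ {b1 b2 θ1 θ2 Y1 Y2 θ1' θ2' S},
    Step X b1 θ1 Y1 → Step X b2 θ2 Y2 → θ1.key ≠ θ2.key →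
    Step Y1 b2 θ2' S → Step Y2 b1 θ1' S →
    θ1'.key = θ1.key → θ2'.key = θ2.key → Ind θ1 θ2 := by
  induction X with
  | nil => intro _ _ _ _ _ _ _ _ _ h1 _ _ _ _ _ _; exact absurd h1 step_nil_inv
  | pre α X0 _ =>
      intro b1 b2 θ1 θ2 Y1 Y2 θ1' θ2' S h1 h2 hk hu' ht' hk1' hk2'
      obtain ⟨rfl, k1, rfl, rfl, _⟩ := step_pre_inv h1
      obtain ⟨rfl, k2, rfl, rfl, _⟩ := step_pre_inv h2
      simp only [PLab.key] at hk
      rcases step_keyed_inv hu' with ⟨S1, rfl, _, _⟩ | ⟨hb, _, _, _⟩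
      · rcases step_keyed_inv ht' with ⟨S2, hS, _, _⟩ | ⟨hb, _, _, _⟩
        · injection hS with e1 e2 e3
          exact absurd e2 hk
        · exact absurd hb (by simp)
      · exact absurd hb (by simp)
  | keyed α k X0 ih =>
      intro b1 b2 θ1 θ2 Y1 Y2 θ1' θ2' S h1 h2 hk hu' ht' hk1' hk2'
      rcases step_keyed_inv h1 with ⟨X1, rfl, h1', hne1⟩ | ⟨rfl, rfl, rfl, hstd1⟩
      · rcases step_keyed_inv h2 with ⟨X2, rfl, h2', hne2⟩ | ⟨rfl, rfl, rfl, hstd2⟩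
        · -- both inner
          rcases step_keyed_inv hu' with ⟨S1, rfl, hu2, _⟩ | ⟨_, rfl, _, _⟩
          · rcases step_keyed_inv ht' with ⟨S2, hS, ht2, _⟩ | ⟨_, rfl, hZ, _⟩
            · injection hS with e1 e2 e3
              subst e3
              exact ih h1' h2' hk hu2 ht2 hk1' hk2'
            · exact Proc.noConfusion hZ
          · simp only [PLab.key] at hk2'
            exact absurd hk2'.symm hne2
        · -- t inner, u backward act
          simp only [PLab.key] at hk
          obtain ⟨rfl, k', rfl, rfl, _⟩ := step_pre_inv ht'
          simp only [PLab.key] at hk1'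
          rcases step_keyed_inv hu' with ⟨S1, hS, _, _⟩ | ⟨_, _, hZ, _⟩
          · injection hS with e1 e2 e3
            exact absurd (hk1'.symm.trans e2) hk
          · exact Proc.noConfusion hZ
      · rcases step_keyed_inv h2 with ⟨X2, rfl, h2', hne2⟩ | ⟨rfl, rfl, rfl, hstd2⟩
        · -- t backward act, u inner
          obtain ⟨rfl, k2', rfl, rfl, _⟩ := step_pre_inv hu'
          simp only [PLab.key] at hk1'
          rcases step_keyed_inv ht' with ⟨S2, hS, ht2, hne⟩ | ⟨_, _, hZ, _⟩
          · exact absurd hk1' hne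
          · exact Proc.noConfusion hZ
        · -- both backward act
          simp only [PLab.key] at hk
          exact absurd rfl hk
  | res X0 a ih =>
      intro b1 b2 θ1 θ2 Y1 Y2 θ1' θ2' S h1 h2 hk hu' ht' hk1' hk2'
      obtain ⟨X1, rfl, h1', _, _⟩ := step_res_inv h1
      obtain ⟨X2, rfl, h2', _, _⟩ := step_res_inv h2
      obtain ⟨S1, rfl, hu2, _, _⟩ := step_res_inv hu'
      obtain ⟨S2, hS, ht2, _, _⟩ := step_res_inv ht'
      injection hS with e1 e2
      subst e1
      exact ih h1' h2' hk hu2 ht2 hk1' hk2'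
  | sum A B ihA ihB =>
      intro b1 b2 θ1 θ2 Y1 Y2 θ1' θ2' S h1 h2 hk hu' ht' hk1' hk2'
      rcases step_sum_inv h1 with ⟨φ1, A1, rfl, rfl, h1', hs1⟩ | ⟨φ1, B1, rfl, rfl, h1', hs1⟩ <;>
        rcases step_sum_inv h2 with ⟨φ2, A2, rfl, rfl, h2', hs2⟩ | ⟨φ2, B2, rfl, rfl, h2', hs2⟩ <;>
        simp only [PLab.key] at hk
      · -- (L,L)
        rcases step_sum_inv hu' with ⟨ψ, P, rfl, rfl, hu2, _⟩ | ⟨ψ, Q, rfl, rfl, hu2, _⟩ <;>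
          simp only [PLab.key] at hk2' <;>
          rcases step_sum_inv ht' with ⟨χ, P', rfl, hS, ht2, _⟩ | ⟨χ, Q', rfl, hS, ht2, _⟩ <;>
          simp only [PLab.key] at hk1' <;> injection hS with e1 e2
        · subst e1
          exact Ind.c1 (ihA h1' h2' hk hu2 ht2 hk1' hk2')
        · exact absurd (congrArg Proc.keys e2) (step_keys_ne ht2)
        · exact absurd (congrArg Proc.keys e2).symm (step_keys_ne hu2)
        · subst e1
          exact absurd (step_same_tgt h1' h2') hk
      · -- (L,R)
        rcases step_sum_inv hu' with ⟨ψ, P, rfl, rfl, hu2, _⟩ | ⟨ψ, Q, rfl, rfl, hu2, hA1s⟩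
        · simp only [PLab.key] at hk2'
          rcases step_sum_inv ht' with ⟨χ, P', rfl, hS, ht2, hB2s⟩ | ⟨χ, Q', rfl, hS, ht2, _⟩
          · exact absurd hB2s (fun h => step_not_both_empty h2' hs1 h)
          · injection hS with e1 e2
            subst e1
            exact absurd ((step_loop h1' hu2).trans hk2') hk
        · exact absurd hA1s (fun h => step_not_both_empty h1' hs2 h)
      · -- (R,L)
        rcases step_sum_inv hu' with ⟨ψ, P, rfl, rfl, hu2, hB1s⟩ | ⟨ψ, Q, rfl, rfl, hu2, _⟩
        · exact absurd hB1s (fun h => step_not_both_empty h1' hs2 h)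
        · simp only [PLab.key] at hk2'
          rcases step_sum_inv ht' with ⟨χ, P', rfl, hS, ht2, _⟩ | ⟨χ, Q', rfl, hS, ht2, hA2s⟩
          · injection hS with e1 e2
            subst e2
            exact absurd ((step_loop h1' hu2).trans hk2') hk
          · exact absurd hA2s (fun h => step_not_both_empty h2' hs1 h)
      · -- (R,R)
        rcases step_sum_inv hu' with ⟨ψ, P, rfl, rfl, hu2, _⟩ | ⟨ψ, Q, rfl, rfl, hu2, _⟩ <;>
          simp only [PLab.key] at hk2' <;>
          rcases step_sum_inv ht' with ⟨χ, P', rfl, hS, ht2, _⟩ | ⟨χ, Q', rfl, hS, ht2, _⟩ <;>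
          simp only [PLab.key] at hk1' <;> injection hS with e1 e2
        · subst e2
          exact absurd (step_same_tgt h1' h2') hk
        · exact absurd (congrArg Proc.keys e1).symm (step_keys_ne hu2)
        · exact absurd (congrArg Proc.keys e1) (step_keys_ne ht2)
        · subst e2
          exact Ind.c1 (ihB h1' h2' hk hu2 ht2 hk1' hk2')
  | par A B ihA ihB =>
      intro b1 b2 θ1 θ2 Y1 Y2 θ1' θ2' S h1 h2 hk hu' ht' hk1' hk2'
      rcases step_par_inv h1 with ⟨φ1, A1, rfl, rfl, h1', hn1⟩ |
        ⟨φ1, B1, rfl, rfl, h1', hn1⟩ |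
        ⟨φ1L, φ1R, A1, B1, rfl, rfl, h1L, h1R, _, _, _, _, key1⟩ <;>
      rcases step_par_inv h2 with ⟨φ2, A2, rfl, rfl, h2', hn2⟩ |
        ⟨φ2, B2, rfl, rfl, h2', hn2⟩ |
        ⟨φ2L, φ2R, A2, B2, rfl, rfl, h2L, h2R, _, _, _, _, key2⟩ <;>
      simp only [PLab.key] at hk
      · -- (L,L)
        rcases step_par_inv hu' with ⟨ψ, P, rfl, rfl, hu2, _⟩ |
          ⟨ψ, Q, rfl, rfl, hu2, _⟩ |
          ⟨ψL, ψR, P, Q, rfl, rfl, huL, huR, _, _, _, _, hψ⟩ <;>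
        simp only [PLab.key] at hk2' <;>
        rcases step_par_inv ht' with ⟨χ, P', rfl, hS, ht2, _⟩ |
          ⟨χ, Q', rfl, hS, ht2, _⟩ |
          ⟨χL, χR, P', Q', rfl, hS, htL, htR, _, _, _, _, hχ⟩ <;>
        simp only [PLab.key] at hk1' <;> injection hS with e1 e2
        · subst e1
          exact Ind.p1 (ihA h1' h2' hk hu2 ht2 hk1' hk2')
        · exact absurd (congrArg Proc.keys e2) (step_keys_ne ht2)
        · exact absurd (congrArg Proc.keys e2) (step_keys_ne htR)
        · exact absurd (congrArg Proc.keys e2).symm (step_keys_ne hu2)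
        · subst e1
          exact absurd (step_same_tgt h1' h2') hk
        · subst e1
          exact (step_tri h1' htL hk1' h2').elim
        · exact absurd (congrArg Proc.keys e2).symm (step_keys_ne huR)
        · subst e1
          exact (step_tri h2' huL hk2' h1').elim
        · subst e1
          exact Ind.p1 (ihA h1' h2' hk huL htL hk1' hk2')
      · -- (L,R)
        exact Ind.p2k (d := .L) hk
      · -- (L,syn)
        rcases step_par_inv hu' with ⟨ψ, P, rfl, rfl, hu2, _⟩ |
          ⟨ψ, Q, rfl, rfl, hu2, _⟩ |
          ⟨ψL, ψR, P, Q, rfl, rfl, huL, huR, _, _, _, _, hψ⟩ <;>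
        simp only [PLab.key] at hk2' <;>
        rcases step_par_inv ht' with ⟨χ, P', rfl, hS, ht2, _⟩ |
          ⟨χ, Q', rfl, hS, ht2, _⟩ |
          ⟨χL, χR, P', Q', rfl, hS, htL, htR, _, _, _, _, hχ⟩ <;>
        simp only [PLab.key] at hk1' <;> injection hS with e1 e2
        · exact absurd (congrArg Proc.keys e2) (step_keys_ne h2R)
        · subst e2
          exact absurd (key2.symm.trans ((step_loop h2R ht2).trans hk1')).symm hk
        · subst e2
          exact absurd (key2.symm.trans ((step_loop h2R htR).trans (hχ.trans hk1'))).symm hk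
        · subst e1
          exact (step_tri h1' ht2 hk1' h2L).elim
        · subst e1
          exact absurd (step_same_tgt h1' h2L) hk
        · subst e1
          exact (step_tri h1' htL hk1' h2L).elim
        · subst e1
          exact Ind.s1 (d := .L) (ihA h1' h2L hk huL ht2 hk1' hk2')
        · subst e1
          exact (step_tri h2L huL hk2' h1').elim
        · subst e1
          exact Ind.s1 (d := .L) (ihA h1' h2L hk huL htL hk1' hk2')
      · -- (R,L)
        exact Ind.p2k (d := .R) hk
      · -- (R,R)
        rcases step_par_inv hu' with ⟨ψ, P, rfl, rfl, hu2, _⟩ |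
          ⟨ψ, Q, rfl, rfl, hu2, _⟩ |
          ⟨ψL, ψR, P, Q, rfl, rfl, huL, huR, _, _, _, _, hψ⟩ <;>
        simp only [PLab.key] at hk2' <;>
        rcases step_par_inv ht' with ⟨χ, P', rfl, hS, ht2, _⟩ |
          ⟨χ, Q', rfl, hS, ht2, _⟩ |
          ⟨χL, χR, P', Q', rfl, hS, htL, htR, _, _, _, _, hχ⟩ <;>
        simp only [PLab.key] at hk1' <;> injection hS with e1 e2
        · subst e2
          exact absurd (step_same_tgt h1' h2') hk
        · exact absurd (congrArg Proc.keys e1).symm (step_keys_ne hu2)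
        · subst e2
          exact (step_tri h1' htR (hχ.trans hk1') h2').elim
        · exact absurd (congrArg Proc.keys e1) (step_keys_ne ht2)
        · subst e2
          exact Ind.p1 (ihB h1' h2' hk hu2 ht2 hk1' hk2')
        · exact absurd (congrArg Proc.keys e1) (step_keys_ne htL)
        · subst e2
          exact (step_tri h2' huR (hψ.trans hk2') h1').elim
        · exact absurd (congrArg Proc.keys e1).symm (step_keys_ne huL)
        · subst e2
          exact Ind.p1 (ihB h1' h2' hk huR htR (hχ.trans hk1') (hψ.trans hk2'))
      · -- (R,syn)
        rcases step_par_inv hu' with ⟨ψ, P, rfl, rfl, hu2, _⟩ |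
          ⟨ψ, Q, rfl, rfl, hu2, _⟩ |
          ⟨ψL, ψR, P, Q, rfl, rfl, huL, huR, _, _, _, _, hψ⟩ <;>
        simp only [PLab.key] at hk2' <;>
        rcases step_par_inv ht' with ⟨χ, P', rfl, hS, ht2, _⟩ |
          ⟨χ, Q', rfl, hS, ht2, _⟩ |
          ⟨χL, χR, P', Q', rfl, hS, htL, htR, _, _, _, _, hχ⟩ <;>
        simp only [PLab.key] at hk1' <;> injection hS with e1 e2
        · subst e2
          exact absurd ((step_same_tgt h1' h2R).trans key2) hk
        · subst e2
          exact (step_tri h1' ht2 hk1' h2R).elim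
        · subst e2
          exact (step_tri h1' htR (hχ.trans hk1') h2R).elim
        · subst e2
          exact (step_tri h2R hu2 (hk2'.trans key2.symm) h1').elim
        · exact absurd (congrArg Proc.keys e1) (step_keys_ne h2L)
        · subst e2
          exact Ind.s1 (d := .R) (ihB h1' h2R (fun h => hk (h.trans key2)) hu2 htR
            (hχ.trans hk1') (hk2'.trans key2.symm))
        · subst e2
          exact (step_tri h2R huR ((hψ.trans hk2').trans key2.symm) h1').elim
        · subst e2
          exact Ind.s1 (d := .R) (ihB h1' h2R (fun h => hk (h.trans key2)) huR ht2
            hk1' ((hψ.trans hk2').trans key2.symm))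
        · subst e2
          exact Ind.s1 (d := .R) (ihB h1' h2R (fun h => hk (h.trans key2)) huR htR
            (hχ.trans hk1') ((hψ.trans hk2').trans key2.symm))
      · -- (syn,L)
        rcases step_par_inv hu' with ⟨ψ, P, rfl, rfl, hu2, _⟩ |
          ⟨ψ, Q, rfl, rfl, hu2, _⟩ |
          ⟨ψL, ψR, P, Q, rfl, rfl, huL, huR, _, _, _, _, hψ⟩ <;>
        simp only [PLab.key] at hk2' <;>
        rcases step_par_inv ht' with ⟨χ, P', rfl, hS, ht2, _⟩ |
          ⟨χ, Q', rfl, hS, ht2, _⟩ |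
          ⟨χL, χR, P', Q', rfl, hS, htL, htR, _, _, _, _, hχ⟩ <;>
        simp only [PLab.key] at hk1' <;> injection hS with e1 e2
        · exact absurd (congrArg Proc.keys e2).symm (step_keys_ne h1R)
        · subst e1
          exact (step_tri h2' hu2 hk2' h1L).elim
        · subst e1
          exact Ind.s2 (d := .L) (ihA h1L h2' hk hu2 htL hk1' hk2')
        · subst e2
          exact absurd (key1.symm.trans ((step_loop h1R hu2).trans hk2')) hk
        · subst e1
          exact absurd (step_same_tgt h1L h2') hk
        · subst e1
          exact (step_tri h1L htL hk1' h2').elim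
        · subst e2
          exact absurd (key1.symm.trans ((step_loop h1R huR).trans (hψ.trans hk2'))) hk
        · subst e1
          exact (step_tri h2' huL hk2' h1L).elim
        · subst e1
          exact Ind.s2 (d := .L) (ihA h1L h2' hk huL htL hk1' hk2')
      · -- (syn,R)
        rcases step_par_inv hu' with ⟨ψ, P, rfl, rfl, hu2, _⟩ |
          ⟨ψ, Q, rfl, rfl, hu2, _⟩ |
          ⟨ψL, ψR, P, Q, rfl, rfl, huL, huR, _, _, _, _, hψ⟩ <;>
        simp only [PLab.key] at hk2' <;>
        rcases step_par_inv ht' with ⟨χ, P', rfl, hS, ht2, _⟩ |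
          ⟨χ, Q', rfl, hS, ht2, _⟩ |
          ⟨χL, χR, P', Q', rfl, hS, htL, htR, _, _, _, _, hχ⟩ <;>
        simp only [PLab.key] at hk1' <;> injection hS with e1 e2
        · subst e2
          exact absurd (key1.symm.trans (step_same_tgt h1R h2')) hk
        · subst e1
          exact absurd ((step_loop h1L hu2).trans hk2') hk
        · subst e2
          exact (step_tri h1R htR ((hχ.trans hk1').trans key1.symm) h2').elim
        · subst e2
          exact (step_tri h2' hu2 hk2' h1R).elim
        · exact absurd (congrArg Proc.keys e1).symm (step_keys_ne h1L)
        · subst e2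
          exact Ind.s2 (d := .R) (ihB h1R h2' (fun h => hk (key1.symm.trans h)) hu2 htR
            ((hχ.trans hk1').trans key1.symm) hk2')
        · subst e2
          exact (step_tri h2' huR (hψ.trans hk2') h1R).elim
        · subst e1
          exact absurd ((step_loop h1L huL).trans hk2') hk
        · subst e2
          exact Ind.s2 (d := .R) (ihB h1R h2' (fun h => hk (key1.symm.trans h)) huR htR
            ((hχ.trans hk1').trans key1.symm) (hψ.trans hk2'))
      · -- (syn,syn)
        rcases step_par_inv hu' with ⟨ψ, P, rfl, rfl, hu2, _⟩ |
          ⟨ψ, Q, rfl, rfl, hu2, _⟩ |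
          ⟨ψL, ψR, P, Q, rfl, rfl, huL, huR, _, _, _, _, hψ⟩ <;>
        simp only [PLab.key] at hk2' <;>
        rcases step_par_inv ht' with ⟨χ, P', rfl, hS, ht2, _⟩ |
          ⟨χ, Q', rfl, hS, ht2, _⟩ |
          ⟨χL, χR, P', Q', rfl, hS, htL, htR, _, _, _, _, hχ⟩ <;>
        simp only [PLab.key] at hk1' <;> injection hS with e1 e2
        · subst e2
          exact absurd (key1.symm.trans ((step_same_tgt h1R h2R).trans key2)) hk
        · subst e1
          exact (step_tri h2L hu2 hk2' h1L).elim
        · subst e2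
          exact (step_tri h1R htR ((hχ.trans hk1').trans key1.symm) h2R).elim
        · subst e2
          exact (step_tri h2R hu2 (hk2'.trans key2.symm) h1R).elim
        · subst e1
          exact absurd (step_same_tgt h1L h2L) hk
        · subst e1
          exact (step_tri h1L htL hk1' h2L).elim
        · subst e2
          exact (step_tri h2R huR ((hψ.trans hk2').trans key2.symm) h1R).elim
        · subst e1
          exact (step_tri h2L huL hk2' h1L).elim
        · subst e1
          subst e2
          exact Ind.s3
            (ihA h1L h2L hk huL htL hk1' hk2')
            (ihB h1R h2R (fun h => hk ((key1.symm.trans h).trans key2))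
              huR htR ((hχ.trans hk1').trans key1.symm) ((hψ.trans hk2').trans key2.symm))

/-- **Coinitial independences coincide.** For coinitial CCSK transitions (over
reachable processes), direct key independence coincides with independence. -/
theorem coinitial_independences_coincide (t u : KTr)
    (ht : t.Valid) (hu : u.Valid) (hr : Reachable t.src)
    (hco : t.src = u.src) :
    t.DKI u ↔ t.ind u := by
  obtain ⟨θ1, hl1, hk1, hs1⟩ := kstep_iff.mp ht
  obtain ⟨θ2, hl2, hk2, hs2⟩ := kstep_iff.mp hu
  have hs2' : Step t.src u.fwd? θ2 u.tgt := by rw [hco]; exact hs2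
  constructor
  · rintro ⟨_, _, _, hkey, S, hS1, hS2⟩
    obtain ⟨θ2', hl2', hk2', hsu'⟩ := kstep_iff.mp hS1
    obtain ⟨θ1', hl1', hk1', hst'⟩ := kstep_iff.mp hS2
    have hkk : θ1.key ≠ θ2.key := by rw [hk1, hk2]; exact hkey
    refine ⟨ht, hu, Or.inl (Reach.step hs2' (Reach.refl _)), θ1, θ2,
      hl1, hk1, hs1, hl2, hk2, hs2, ?_⟩
    exact square_ind t.src hs1 hs2' hkk hsu' hst'
      (hk1'.trans hk1.symm) (hk2'.trans hk2.symm)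
  · rintro ⟨_, _, _, θ1x, θ2x, hl1x, hk1x, hs1x, hl2x, hk2x, hs2x, hind⟩
    have hs2x' : Step t.src u.fwd? θ2x u.tgt := by rw [hco]; exact hs2x
    obtain ⟨hkk, S, hA, hB⟩ := ind_diamond t.src hs1x hs2x' hind
    refine ⟨ht, hu, hco, ?_, S, ?_, ?_⟩
    · rw [← hk1x, ← hk2x]; exact hkk
    · exact kstep_iff.mpr ⟨θ2x, hl2x, hk2x, hA⟩
    · exact kstep_iff.mpr ⟨θ1x, hl1x, hk1x, hB⟩

end CCSKP
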